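/- Let ε > 0 and ν ∈ ℝ³. Let Φ : ℝ⁴ → ℝ be twice continuously differentiable near a point p ∈ ℝ⁴ with ∂₁Φ(p) ≠ 0, and let h, e : ℝ⁴ → ℝ³ be differentiable near p. Set N = (1, −∂₂Φ, −∂₃Φ), w₄ = ⟨e, N⟩, μ₂ = h₂ + (∂₂Φ)h₁ + ε(∂ₜΦ)e₃, and μ₃ = h₃ + (∂₃Φ)h₁ − ε(∂ₜΦ)e₂. Assume that at the point p one has ε∂ₜ^Φ e − ∇^Φ × h + ε(∇^Φ · e)ν = 0 and ∂ₜΦ(p) = ⟨ν, N(p)⟩. Then ε∂ₜw₄ + ∂₃μ₂ − ∂₂μ₃ = 0 at p. -/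

import Mathlib

open Filter Topology

/-- Partial derivative `∂ᵢ f` on `ℝ⁴` (coordinates `(t, x₁, x₂, x₃)` indexed by `Fin 4`,
with `∂₀ = ∂ₜ`). -/
noncomputable def pd (i : Fin 4) (f : (Fin 4 → ℝ) → ℝ) (x : Fin 4 → ℝ) : ℝ :=
  fderiv ℝ f x (Pi.single i 1)

/-- Transformed derivative `∂ᵢ^Φ`: `∂ₜ^Φ f = ∂ₜf − (∂ₜΦ/∂₁Φ)∂₁f`,
`∂₁^Φ f = ∂₁f/∂₁Φ`, and `∂ⱼ^Φ f = ∂ⱼf − (∂ⱼΦ/∂₁Φ)∂₁f` for `j = 2, 3`. -/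
noncomputable def pdPhi (Φ : (Fin 4 → ℝ) → ℝ) (i : Fin 4) (f : (Fin 4 → ℝ) → ℝ)
    (x : Fin 4 → ℝ) : ℝ :=
  if i = 1 then pd 1 f x / pd 1 Φ x else pd i f x - pd i Φ x / pd 1 Φ x * pd 1 f x

/-- Transformed divergence `∇^Φ · u = ∂₁^Φu₁ + ∂₂^Φu₂ + ∂₃^Φu₃`. -/
noncomputable def divPhi (Φ : (Fin 4 → ℝ) → ℝ) (u : (Fin 4 → ℝ) → Fin 3 → ℝ)
    (x : Fin 4 → ℝ) : ℝ :=
  pdPhi Φ 1 (fun y => u y 0) x + pdPhi Φ 2 (fun y => u y 1) x + pdPhi Φ 3 (fun y => u y 2) x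

/-- Transformed curl
`∇^Φ × u = (∂₂^Φu₃ − ∂₃^Φu₂, ∂₃^Φu₁ − ∂₁^Φu₃, ∂₁^Φu₂ − ∂₂^Φu₁)`. -/
noncomputable def curlPhi (Φ : (Fin 4 → ℝ) → ℝ) (u : (Fin 4 → ℝ) → Fin 3 → ℝ)
    (x : Fin 4 → ℝ) : Fin 3 → ℝ :=
  ![pdPhi Φ 2 (fun y => u y 2) x - pdPhi Φ 3 (fun y => u y 1) x,
    pdPhi Φ 3 (fun y => u y 0) x - pdPhi Φ 1 (fun y => u y 2) x,
    pdPhi Φ 1 (fun y => u y 1) x - pdPhi Φ 2 (fun y => u y 0) x]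


/-! The product rule expands `ε∂ₜw₄ + ∂₃μ₂ − ∂₂μ₃` into first derivatives of `e`, `h` plus
terms with second derivatives of `Φ`; the latter cancel in pairs by symmetry of the Hessian
(`∂ₜ∂ⱼΦ` against `∂ⱼ∂ₜΦ`, `∂₃∂₂Φ` against `∂₂∂₃Φ`). Once `∂ₜΦ = ⟨ν, N⟩` identifies the
coefficient of `ε ∇^Φ · e`, what remains is exactly the normal component
`⟨N, ε∂ₜ^Φ e − ∇^Φ × h + ε(∇^Φ · e)ν⟩` of the Maxwell residual, which vanishes. -/

section PartialDerivatives

variable {f g : (Fin 4 → ℝ) → ℝ} {p : Fin 4 → ℝ}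

lemma pd_const (c : ℝ) (i : Fin 4) : pd i (fun _ => c) p = 0 := by
  simp [pd]

lemma pd_add (hf : DifferentiableAt ℝ f p) (hg : DifferentiableAt ℝ g p) (i : Fin 4) :
    pd i (fun x => f x + g x) p = pd i f p + pd i g p := by
  simp [pd, fderiv_fun_add hf hg]

lemma pd_sub (hf : DifferentiableAt ℝ f p) (hg : DifferentiableAt ℝ g p) (i : Fin 4) :
    pd i (fun x => f x - g x) p = pd i f p - pd i g p := by
  simp [pd, fderiv_fun_sub hf hg]

lemma pd_mul (hf : DifferentiableAt ℝ f p) (hg : DifferentiableAt ℝ g p) (i : Fin 4) :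
    pd i (fun x => f x * g x) p = f p * pd i g p + g p * pd i f p := by
  simp [pd, fderiv_fun_mul hf hg]

lemma pd_pd_eq_fderiv_fderiv (hf : DifferentiableAt ℝ (fderiv ℝ f) p) (i j : Fin 4) :
    pd i (pd j f) p = fderiv ℝ (fderiv ℝ f) p (Pi.single i 1) (Pi.single j 1) := by
  unfold pd
  rw [fderiv_clm_apply hf (differentiableAt_const _)]
  simp

lemma ContDiffAt.differentiableAt_pd (hf : ContDiffAt ℝ 2 f p) (i : Fin 4) :
    DifferentiableAt ℝ (pd i f) p :=
  ((hf.fderiv_right (by norm_num)).differentiableAt one_ne_zero).clm_apply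
    (differentiableAt_const _)

lemma ContDiffAt.pd_pd_comm (hf : ContDiffAt ℝ 2 f p) (i j : Fin 4) :
    pd i (pd j f) p = pd j (pd i f) p := by
  have hf' := (hf.fderiv_right (m := 1) (by norm_num)).differentiableAt one_ne_zero
  rw [pd_pd_eq_fderiv_fderiv hf', pd_pd_eq_fderiv_fderiv hf',
    hf.isSymmSndFDerivAt (by norm_num)]

end PartialDerivatives

noncomputable def maxwellResidual (ε : ℝ) (ν : Fin 3 → ℝ) (Φ : (Fin 4 → ℝ) → ℝ)
    (h e : (Fin 4 → ℝ) → Fin 3 → ℝ) (x : Fin 4 → ℝ) (i : Fin 3) : ℝ :=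
  ε * pdPhi Φ 0 (fun y => e y i) x - curlPhi Φ h x i + ε * divPhi Φ e x * ν i

lemma boundary_combination_eq_normal_maxwellResidual {ε : ℝ} {ν : Fin 3 → ℝ}
    {Φ : (Fin 4 → ℝ) → ℝ} {h e : (Fin 4 → ℝ) → Fin 3 → ℝ} {p : Fin 4 → ℝ}
    (hΦ : ContDiffAt ℝ 2 Φ p) (hh : DifferentiableAt ℝ h p) (he : DifferentiableAt ℝ e p)
    (hbc : pd 0 Φ p = ν 0 - ν 1 * pd 2 Φ p - ν 2 * pd 3 Φ p) :
    ε * pd 0 (fun x => e x 0 - pd 2 Φ x * e x 1 - pd 3 Φ x * e x 2) p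
      + pd 3 (fun x => h x 1 + pd 2 Φ x * h x 0 + ε * pd 0 Φ x * e x 2) p
      - pd 2 (fun x => h x 2 + pd 3 Φ x * h x 0 - ε * pd 0 Φ x * e x 1) p
      = maxwellResidual ε ν Φ h e p 0 - pd 2 Φ p * maxwellResidual ε ν Φ h e p 1
        - pd 3 Φ p * maxwellResidual ε ν Φ h e p 2 := by
  have hpdΦ := hΦ.differentiableAt_pd
  simp (disch := fun_prop) only [pd_add, pd_sub, pd_mul, pd_const]
  rw [hΦ.pd_pd_comm 0 2, hΦ.pd_pd_comm 0 3, hΦ.pd_pd_comm 3 2]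
  simp only [maxwellResidual, pdPhi, divPhi, curlPhi, Matrix.cons_val, Fin.reduceEq,
    ↓reduceIte]
  rw [hbc]
  ring

theorem stmt_10 (ε : ℝ) (ν : Fin 3 → ℝ)
    (Φ : (Fin 4 → ℝ) → ℝ) (h e : (Fin 4 → ℝ) → Fin 3 → ℝ) (p : Fin 4 → ℝ)
    (hΦ : ContDiffAt ℝ 2 Φ p)
    (hh : ∀ᶠ x in 𝓝 p, DifferentiableAt ℝ h x)
    (he : ∀ᶠ x in 𝓝 p, DifferentiableAt ℝ e x)
    (heq : ∀ i : Fin 3,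
      ε * pdPhi Φ 0 (fun x => e x i) p - curlPhi Φ h p i + ε * divPhi Φ e p * ν i = 0)
    (hbc : pd 0 Φ p = ν 0 - ν 1 * pd 2 Φ p - ν 2 * pd 3 Φ p) :
    ε * pd 0 (fun x => e x 0 - pd 2 Φ x * e x 1 - pd 3 Φ x * e x 2) p
      + pd 3 (fun x => h x 1 + pd 2 Φ x * h x 0 + ε * pd 0 Φ x * e x 2) p
      - pd 2 (fun x => h x 2 + pd 3 Φ x * h x 0 - ε * pd 0 Φ x * e x 1) p = 0 := by
  rw [boundary_combination_eq_normal_maxwellResidual hΦ hh.self_of_nhds he.self_of_nhds hbc]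
  simp [maxwellResidual, heq]
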